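/- Let ρ_ABC be a density matrix on H_A ⊗ H_B ⊗ H_C with ρ_B invertible. If ρ_ABC = ρ_AB ρ_B^{-1} ρ_BC, then also ρ_ABC = Φ(ρ_BC) where Φ(X) := ρ_B^{1/2} (ρ_B^{-1/2} ρ_AB ρ_B^{-1/2})^{1/2} ρ_B^{-1/2} X ρ_B^{-1/2} (ρ_B^{-1/2} ρ_AB ρ_B^{-1/2})^{1/2} ρ_B^{1/2}, and conversely if ρ_ABC = Φ(ρ_BC) then ρ_ABC = ρ_AB ρ_B^{-1} ρ_BC. -/

import Mathlib

open Matrix BigOperators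
open scoped Kronecker ComplexOrder

noncomputable section

namespace BSQMC

variable {A B C : Type*} [Fintype A] [Fintype B] [Fintype C]
  [DecidableEq A] [DecidableEq B] [DecidableEq C]

def ptA (M : Matrix (A × B × C) (A × B × C) ℂ) : Matrix (B × C) (B × C) ℂ :=
  Matrix.of fun p q => ∑ a : A, M (a, p) (a, q)

def ptC (M : Matrix (A × B × C) (A × B × C) ℂ) : Matrix (A × B) (A × B) ℂ :=
  Matrix.of fun p q => ∑ c : C, M (p.1, p.2, c) (q.1, q.2, c)

def ptAC (M : Matrix (A × B × C) (A × B × C) ℂ) : Matrix B B ℂ :=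
  Matrix.of fun b b' => ∑ a : A, ∑ c : C, M (a, b, c) (a, b', c)

def embB (X : Matrix B B ℂ) : Matrix (A × B × C) (A × B × C) ℂ :=
  Matrix.of fun p q =>
    (if p.1 = q.1 then (1 : ℂ) else 0) * X p.2.1 q.2.1 * (if p.2.2 = q.2.2 then 1 else 0)

def embAB (X : Matrix (A × B) (A × B) ℂ) : Matrix (A × B × C) (A × B × C) ℂ :=
  Matrix.of fun p q => X (p.1, p.2.1) (q.1, q.2.1) * (if p.2.2 = q.2.2 then (1 : ℂ) else 0)

def embBC (X : Matrix (B × C) (B × C) ℂ) : Matrix (A × B × C) (A × B × C) ℂ :=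
  Matrix.of fun p q => (if p.1 = q.1 then (1 : ℂ) else 0) * X p.2 q.2

def embB2 (X : Matrix B B ℂ) : Matrix (A × B) (A × B) ℂ :=
  Matrix.of fun p q => (if p.1 = q.1 then (1 : ℂ) else 0) * X p.2 q.2

/-- The positive semidefinite square root, as `Matrix.PosSemidef.sqrt` was defined in Mathlib
(December 2024); it has since been removed. -/
def _root_.Matrix.PosSemidef.sqrt {n 𝕜 : Type*} [Fintype n] [DecidableEq n] [RCLike 𝕜]
    {M : Matrix n n 𝕜} (hM : M.PosSemidef) : Matrix n n 𝕜 :=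
  hM.1.eigenvectorUnitary.1 * diagonal ((↑) ∘ (√·) ∘ hM.1.eigenvalues) *
  (star hM.1.eigenvectorUnitary : Matrix n n 𝕜)

open scoped MatrixOrder in
lemma _root_.Matrix.PosSemidef.sqrt_eq_CFC {n 𝕜 : Type*} [Fintype n] [DecidableEq n] [RCLike 𝕜]
    {M : Matrix n n 𝕜} (hM : M.PosSemidef) : hM.sqrt = CFC.sqrt M := by
  rw [CFC.sqrt_eq_real_sqrt M (Matrix.nonneg_iff_posSemidef.mpr hM),
    cfcₙ_eq_cfc (hf := Real.continuous_sqrt.continuousOn) (hf0 := Real.sqrt_zero),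
    Matrix.IsHermitian.cfc_eq hM.1]
  simp [Matrix.PosSemidef.sqrt, Matrix.IsHermitian.cfc]

open scoped MatrixOrder in
lemma _root_.Matrix.PosSemidef.posSemidef_sqrt {n 𝕜 : Type*} [Fintype n] [DecidableEq n]
    [RCLike 𝕜] {M : Matrix n n 𝕜} (hM : M.PosSemidef) : hM.sqrt.PosSemidef := by
  rw [hM.sqrt_eq_CFC]
  exact Matrix.nonneg_iff_posSemidef.mp (CFC.sqrt_nonneg M)

open scoped MatrixOrder in
lemma _root_.Matrix.PosSemidef.sqrt_mul_self {n 𝕜 : Type*} [Fintype n] [DecidableEq n]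
    [RCLike 𝕜] {M : Matrix n n 𝕜} (hM : M.PosSemidef) : hM.sqrt * hM.sqrt = M := by
  rw [hM.sqrt_eq_CFC]
  exact CFC.sqrt_mul_sqrt_self M (Matrix.nonneg_iff_posSemidef.mpr hM)

open scoped MatrixOrder in
lemma _root_.Matrix.PosSemidef.eq_sqrt_of_sq_eq {n 𝕜 : Type*} [Fintype n] [DecidableEq n]
    [RCLike 𝕜] {M : Matrix n n 𝕜} (hM : M.PosSemidef) {P : Matrix n n 𝕜} (hP : P.PosSemidef)
    (h : M ^ 2 = P) : M = hP.sqrt := by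
  rw [hP.sqrt_eq_CFC]
  exact (CFC.sqrt_unique (by rw [← h, sq]) (Matrix.nonneg_iff_posSemidef.mpr hM)).symm

/-! ### auxiliary defs -/

def embB3 (X : Matrix B B ℂ) : Matrix (B × C) (B × C) ℂ :=
  Matrix.of fun p q => X p.1 q.1 * (if p.2 = q.2 then (1 : ℂ) else 0)

def ptA2 (M : Matrix (A × B) (A × B) ℂ) : Matrix B B ℂ :=
  Matrix.of fun b b' => ∑ a : A, M (a, b) (a, b')

/-! ### sum swapping helper -/

private lemma sum_swap3 {α β γ : Type*} [Fintype α] [Fintype β] [Fintype γ]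
    (f : α → β → γ → ℂ) :
    ∑ a : α, ∑ b : β, ∑ c : γ, f a b c = ∑ b : β, ∑ c : γ, ∑ a : α, f a b c := by
  rw [Finset.sum_comm]
  exact Finset.sum_congr rfl fun b _ => Finset.sum_comm

/-! ### multiplicativity and other algebra lemmas -/

lemma embAB_mul (X Y : Matrix (A × B) (A × B) ℂ) :
    embAB (A := A) (B := B) (C := C) (X * Y) = embAB X * embAB Y := by
  ext ⟨a, b, c⟩ ⟨a', b', c'⟩
  simp [embAB, Matrix.mul_apply, Fintype.sum_prod_type, Finset.mul_sum, Finset.sum_mul,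
    mul_ite, ite_mul, mul_assoc]

lemma embBC_mul (X Y : Matrix (B × C) (B × C) ℂ) :
    embBC (A := A) (X * Y) = embBC X * embBC Y := by
  ext ⟨a, b, c⟩ ⟨a', b', c'⟩
  simp [embBC, Matrix.mul_apply, Fintype.sum_prod_type, Finset.mul_sum, Finset.sum_mul,
    mul_ite, ite_mul, mul_assoc]

lemma embB2_mul (X Y : Matrix B B ℂ) :
    embB2 (A := A) (X * Y) = embB2 X * embB2 Y := by
  ext ⟨a, b⟩ ⟨a', b'⟩
  simp [embB2, Matrix.mul_apply, Fintype.sum_prod_type, Finset.mul_sum, Finset.sum_mul,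
    mul_ite, ite_mul, mul_assoc]

lemma embB3_mul (X Y : Matrix B B ℂ) :
    embB3 (C := C) (X * Y) = embB3 X * embB3 Y := by
  ext ⟨b, c⟩ ⟨b', c'⟩
  simp [embB3, Matrix.mul_apply, Fintype.sum_prod_type, Finset.mul_sum, Finset.sum_mul,
    mul_ite, ite_mul, mul_assoc]

lemma embB3_one : embB3 (C := C) (1 : Matrix B B ℂ) = 1 := by
  ext ⟨b, c⟩ ⟨b', c'⟩
  simp [embB3, Matrix.one_apply, Prod.ext_iff, ite_and]
  split_ifs <;> rfl

lemma embB_one : embB (A := A) (C := C) (1 : Matrix B B ℂ) = 1 := by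
  ext ⟨a, b, c⟩ ⟨a', b', c'⟩
  simp [embB, Matrix.one_apply, Prod.ext_iff, ite_and]
  split_ifs <;> rfl

lemma embAB_embB2 (X : Matrix B B ℂ) :
    embAB (C := C) (embB2 (A := A) X) = embB X := by
  ext ⟨a, b, c⟩ ⟨a', b', c'⟩
  simp [embAB, embB2, embB]

lemma embBC_embB3 (X : Matrix B B ℂ) :
    embBC (A := A) (embB3 (C := C) X) = embB X := by
  ext ⟨a, b, c⟩ ⟨a', b', c'⟩
  simp [embBC, embB3, embB, mul_assoc]

lemma embAB_conjTranspose (X : Matrix (A × B) (A × B) ℂ) :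
    (embAB (C := C) X)ᴴ = embAB Xᴴ := by
  ext ⟨a, b, c⟩ ⟨a', b', c'⟩
  simp [embAB, Matrix.conjTranspose_apply, eq_comm, apply_ite (starRingEnd ℂ)]

lemma embBC_conjTranspose (X : Matrix (B × C) (B × C) ℂ) :
    (embBC (A := A) X)ᴴ = embBC Xᴴ := by
  ext ⟨a, b, c⟩ ⟨a', b', c'⟩
  simp [embBC, Matrix.conjTranspose_apply, eq_comm, apply_ite (starRingEnd ℂ)]

lemma embB2_conjTranspose (X : Matrix B B ℂ) :
    (embB2 (A := A) X)ᴴ = embB2 Xᴴ := by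
  ext ⟨a, b⟩ ⟨a', b'⟩
  simp [embB2, Matrix.conjTranspose_apply, eq_comm, apply_ite (starRingEnd ℂ)]

lemma embB3_conjTranspose (X : Matrix B B ℂ) :
    (embB3 (C := C) X)ᴴ = embB3 Xᴴ := by
  ext ⟨b, c⟩ ⟨b', c'⟩
  simp [embB3, Matrix.conjTranspose_apply, eq_comm, apply_ite (starRingEnd ℂ)]

lemma ptA_conjTranspose (M : Matrix (A × B × C) (A × B × C) ℂ) :
    (ptA M)ᴴ = ptA Mᴴ := by
  ext p q
  simp [ptA, Matrix.conjTranspose_apply]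

lemma ptA_embBC_mul (X : Matrix (B × C) (B × C) ℂ) (G : Matrix (A × B × C) (A × B × C) ℂ) :
    ptA (embBC X * G) = X * ptA G := by
  ext p q
  simp only [ptA, embBC, Matrix.mul_apply, Matrix.of_apply, Fintype.sum_prod_type,
    ite_mul, one_mul, zero_mul, Finset.sum_ite_irrel, Finset.sum_const_zero,
    Finset.sum_ite_eq, Finset.sum_ite_eq', Finset.mem_univ, if_true, Finset.mul_sum]
  exact sum_swap3 _

lemma ptA_mul_embBC (X : Matrix (B × C) (B × C) ℂ) (G : Matrix (A × B × C) (A × B × C) ℂ) :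
    ptA (G * embBC X) = ptA G * X := by
  ext p q
  simp only [ptA, embBC, Matrix.mul_apply, Matrix.of_apply, Fintype.sum_prod_type,
    mul_ite, mul_one, mul_zero, ite_mul, one_mul, zero_mul, Finset.sum_ite_irrel,
    Finset.sum_const_zero, Finset.sum_ite_eq, Finset.sum_ite_eq', Finset.mem_univ, if_true,
    Finset.sum_mul]
  exact sum_swap3 _

lemma ptA_embAB (W : Matrix (A × B) (A × B) ℂ) :
    ptA (embAB (C := C) W) = embB3 (ptA2 W) := by
  ext ⟨b, c⟩ ⟨b', c'⟩
  simp [ptA, embAB, embB3, ptA2, Finset.sum_mul]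

lemma trace_mul_embBC (G : Matrix (A × B × C) (A × B × C) ℂ) (X : Matrix (B × C) (B × C) ℂ) :
    (G * embBC X).trace = (ptA G * X).trace := by
  simp only [Matrix.trace, Matrix.diag_apply, Matrix.mul_apply, ptA, embBC,
    Fintype.sum_prod_type, Matrix.of_apply, mul_ite, mul_one, mul_zero, ite_mul, zero_mul,
    Finset.sum_ite_irrel, Finset.sum_const_zero, Finset.sum_ite_eq, Finset.sum_ite_eq',
    Finset.mem_univ, if_true, Finset.sum_mul, Finset.mul_sum, one_mul]
  rw [sum_swap3]
  exact Finset.sum_congr rfl fun b _ => Finset.sum_congr rfl fun c _ => sum_swap3 _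

lemma ptA2_embB2_mul_mul (X Y : Matrix B B ℂ) (W : Matrix (A × B) (A × B) ℂ) :
    ptA2 (embB2 X * W * embB2 Y) = X * ptA2 W * Y := by
  ext b b'
  simp only [ptA2, embB2, Matrix.mul_apply, Matrix.of_apply, Fintype.sum_prod_type,
    mul_ite, mul_one, mul_zero, ite_mul, one_mul, zero_mul, Finset.sum_ite_irrel,
    Finset.sum_const_zero, Finset.sum_ite_eq, Finset.sum_ite_eq', Finset.mem_univ, if_true,
    Finset.sum_mul, Finset.mul_sum]
  rw [Finset.sum_comm]
  exact Finset.sum_congr rfl fun y _ => Finset.sum_comm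

lemma ptA2_ptC (M : Matrix (A × B × C) (A × B × C) ℂ) :
    ptA2 (ptC M) = ptAC M := by
  ext b b'
  simp [ptA2, ptC, ptAC]

lemma trace_conjTranspose_mul_self_eq_zero' {n : Type*} [Fintype n] [DecidableEq n]
    (M : Matrix n n ℂ) (h : (Mᴴ * M).trace = 0) : M = 0 := by
  have h2 : ∑ j : n, ∑ i : n, Complex.normSq (M i j) = 0 := by
    have : (Mᴴ * M).trace = ((∑ j : n, ∑ i : n, Complex.normSq (M i j) : ℝ) : ℂ) := by
      simp only [Matrix.trace, Matrix.diag_apply, Matrix.mul_apply, Matrix.conjTranspose_apply]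
      push_cast
      congr 1; ext j; congr 1; ext i
      rw [Complex.normSq_eq_conj_mul_self]; rfl
    rw [this] at h
    exact_mod_cast h
  ext i j
  have := (Finset.sum_eq_zero_iff_of_nonneg (fun j _ => Finset.sum_nonneg fun i _ => Complex.normSq_nonneg _)).1 h2 j (Finset.mem_univ j)
  have := (Finset.sum_eq_zero_iff_of_nonneg (fun i _ => Complex.normSq_nonneg _)).1 this i (Finset.mem_univ i)
  simpa using Complex.normSq_eq_zero.mp this


lemma embB2_one : embB2 (A := A) (1 : Matrix B B ℂ) = 1 := by
  ext ⟨a, b⟩ ⟨a', b'⟩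
  simp [embB2, Matrix.one_apply, Prod.ext_iff, ite_and]
  split_ifs <;> rfl

lemma embB_mul (X Y : Matrix B B ℂ) :
    embB (A := A) (C := C) (X * Y) = embB X * embB Y := by
  rw [← embAB_embB2, ← embAB_embB2, ← embAB_embB2, ← embAB_mul, ← embB2_mul]

lemma embB_conjTranspose (X : Matrix B B ℂ) :
    (embB (A := A) (C := C) X)ᴴ = embB Xᴴ := by
  rw [← embAB_embB2, embAB_conjTranspose, embB2_conjTranspose, embAB_embB2]

theorem bsqmc_iff_Phi_recovery
    (ρ : Matrix (A × B × C) (A × B × C) ℂ)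
    (hρ : ρ.PosSemidef) (htr : ρ.trace = 1)
    (hB : (ptAC ρ).PosDef)
    (hAB : (ptC ρ).PosSemidef) :
    ρ = embAB (ptC ρ) * embB (ptAC ρ)⁻¹ * embBC (ptA ρ) ↔
      ρ = embB hB.posSemidef.sqrt *
          embAB (hAB.mul_mul_conjTranspose_same (embB2 hB.inv.posSemidef.sqrt)).sqrt *
          embB hB.inv.posSemidef.sqrt * embBC (ptA ρ) * embB hB.inv.posSemidef.sqrt *
          embAB (hAB.mul_mul_conjTranspose_same (embB2 hB.inv.posSemidef.sqrt)).sqrt *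
          embB hB.posSemidef.sqrt := by
  set t := hB.posSemidef.sqrt with htdef
  set s := hB.inv.posSemidef.sqrt with hsdef
  set M := (hAB.mul_mul_conjTranspose_same (embB2 (A := A) s)).sqrt with hMdef
  have htt : t * t = ptAC ρ := hB.posSemidef.sqrt_mul_self
  have hss : s * s = (ptAC ρ)⁻¹ := hB.inv.posSemidef.sqrt_mul_self
  have htH : tᴴ = t := hB.posSemidef.posSemidef_sqrt.1
  have hsH : sᴴ = s := hB.inv.posSemidef.posSemidef_sqrt.1
  have hdet : IsUnit t.det := by
    have h1 : IsUnit (ptAC ρ).det := hB.det_pos.ne'.isUnit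
    rw [← htt, Matrix.det_mul] at h1
    exact isUnit_of_mul_isUnit_left h1
  have hst : s = t⁻¹ := by
    have h1 : (t⁻¹).PosSemidef := hB.posSemidef.posSemidef_sqrt.inv
    have h2 : (t⁻¹) ^ 2 = (ptAC ρ)⁻¹ := by rw [pow_two, ← Matrix.mul_inv_rev, htt]
    rw [hsdef, ← h1.eq_sqrt_of_sq_eq hB.inv.posSemidef h2]
  have hst1 : s * t = 1 := by rw [hst]; exact Matrix.nonsing_inv_mul t hdet
  have hts1 : t * s = 1 := by rw [hst]; exact Matrix.mul_nonsing_inv t hdet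
  have hsρBs : s * ptAC ρ * s = 1 := by
    rw [← htt]
    simp only [mul_assoc]
    rw [hts1, mul_one, hst1]
  have hMH : Mᴴ = M := (hAB.mul_mul_conjTranspose_same (embB2 s)).posSemidef_sqrt.1
  have hMM : M * M = embB2 s * ptC ρ * embB2 s := by
    calc M * M = embB2 s * ptC ρ * (embB2 s)ᴴ :=
          (hAB.mul_mul_conjTranspose_same (embB2 (A := A) s)).sqrt_mul_self
      _ = embB2 s * ptC ρ * embB2 s := by rw [embB2_conjTranspose, hsH]
  set N := embAB (C := C) M with hNdef
  have hNH : Nᴴ = N := by rw [hNdef, embAB_conjTranspose, hMH]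
  set Y := embB3 (C := C) s * ptA ρ * embB3 s with hYdef
  set Z := embBC (A := A) Y with hZdef
  have hptAH : (ptA ρ)ᴴ = ptA ρ := by rw [ptA_conjTranspose, hρ.1.eq]
  have hYH : Yᴴ = Y := by
    rw [hYdef, Matrix.conjTranspose_mul, Matrix.conjTranspose_mul, embB3_conjTranspose, hsH,
      hptAH]
    simp only [mul_assoc]
  have hZH : Zᴴ = Z := by rw [hZdef, embBC_conjTranspose, hYH]
  have ets : ∀ X : Matrix (A × B × C) (A × B × C) ℂ, embB t * (embB s * X) = X := by
    intro X; rw [← mul_assoc, ← embB_mul, hts1, embB_one, one_mul]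
  have est : ∀ X : Matrix (A × B × C) (A × B × C) ℂ, embB s * (embB t * X) = X := by
    intro X; rw [← mul_assoc, ← embB_mul, hst1, embB_one, one_mul]
  have ets' : embB (A := A) (C := C) t * embB s = 1 := by rw [← embB_mul, hts1, embB_one]
  have est' : embB (A := A) (C := C) s * embB t = 1 := by rw [← embB_mul, hst1, embB_one]
  have conjts : ∀ G : Matrix (A × B × C) (A × B × C) ℂ,
      embB s * (embB t * G * embB t) * embB s = G := by
    intro G
    simp only [mul_assoc]
    rw [ets', mul_one, est]
  -- embedded marginals
  have h1 : embB2 (A := A) t * (M * M) * embB2 t = ptC ρ := by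
    rw [hMM]
    simp only [← mul_assoc]
    rw [← embB2_mul, hts1, embB2_one, one_mul, mul_assoc, ← embB2_mul, hst1, embB2_one,
      mul_one]
  have hptC : embAB (C := C) (ptC ρ) = embB t * (N * N) * embB t := by
    rw [← h1, embAB_mul, embAB_mul, embAB_mul, embAB_embB2, hNdef]
  have h2 : embB3 (C := C) t * Y * embB3 t = ptA ρ := by
    rw [hYdef]
    simp only [← mul_assoc]
    rw [← embB3_mul, hts1, embB3_one, one_mul, mul_assoc, ← embB3_mul, hst1, embB3_one,
      mul_one]
  have hptA : embBC (A := A) (ptA ρ) = embB t * Z * embB t := by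
    rw [← h2, embBC_mul, embBC_mul, embBC_embB3, hZdef]
  -- the two conditions in reduced form
  have cond1 : embAB (C := C) (ptC ρ) * embB (ptAC ρ)⁻¹ * embBC (ptA ρ)
      = embB t * (N * N * Z) * embB t := by
    rw [hptC, hptA, ← hss, embB_mul]
    simp only [mul_assoc]
    rw [ets, est]
  have cond2 : embB t * N * embB s * embBC (A := A) (ptA ρ) * embB s * N * embB t
      = embB t * (N * Z * N) * embB t := by
    rw [hptA]
    simp only [mul_assoc]
    rw [est, ets]
  rw [cond1, cond2]
  constructor
  · -- forward direction
    intro h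
    have hherm : embB t * (N * N * Z) * embB t = embB t * (Z * (N * N)) * embB t := by
      have h3 : (embB (A := A) (C := C) t * (N * N * Z) * embB t)ᴴ
          = embB t * (Z * (N * N)) * embB t := by
        simp only [Matrix.conjTranspose_mul, embB_conjTranspose, htH, hNH, hZH]
        simp only [mul_assoc]
      conv_lhs => rw [← h]
      rw [← h3, ← h]
      exact hρ.1.eq.symm
    have hcomm : N * N * Z = Z * (N * N) := by
      have := congrArg (fun X => embB (A := A) (C := C) s * X * embB s) hherm
      simpa only [conjts] using this
    set W := N * Z - Z * N with hWdef
    have h0 : N * W + W * N = 0 := by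
      simp only [hWdef, mul_sub, sub_mul, ← mul_assoc]
      rw [hcomm]
      simp only [← mul_assoc]
      abel
    have hNW : N * W = -(W * N) := eq_neg_of_add_eq_zero_left h0
    have htr0 : (N * (W * W)).trace = 0 := by
      have e1 : (N * (W * W)).trace = -(N * (W * W)).trace := by
        calc (N * (W * W)).trace = ((N * W) * W).trace := by rw [mul_assoc]
          _ = (W * (N * W)).trace := by rw [Matrix.trace_mul_comm]
          _ = (W * -(W * N)).trace := by rw [hNW]
          _ = -((W * (W * N))).trace := by rw [mul_neg, Matrix.trace_neg]
          _ = -(((W * W) * N)).trace := by rw [mul_assoc]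
          _ = -(N * (W * W)).trace := by rw [Matrix.trace_mul_comm]
      have := add_eq_zero_iff_eq_neg.2 e1
      rw [← two_mul] at this
      simpa using this
    have hMps : M.PosSemidef := (hAB.mul_mul_conjTranspose_same (embB2 s)).posSemidef_sqrt
    set M' := hMps.sqrt with hM'def
    have hM'H : M'ᴴ = M' := hMps.posSemidef_sqrt.1
    have hM'M' : M' * M' = M := hMps.sqrt_mul_self
    set N' := embAB (C := C) M' with hN'def
    have hN'H : N'ᴴ = N' := by rw [hN'def, embAB_conjTranspose, hM'H]
    have hN'N' : N' * N' = N := by rw [hN'def, hNdef, ← embAB_mul, hM'M']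
    have hWH : Wᴴ = -W := by
      rw [hWdef]
      simp only [Matrix.conjTranspose_sub, Matrix.conjTranspose_mul, hNH, hZH]
      abel
    have htr1 : ((N' * W)ᴴ * (N' * W)).trace = 0 := by
      have e2 : (N' * W)ᴴ * (N' * W) = -(W * (N * W)) := by
        rw [Matrix.conjTranspose_mul, hN'H, hWH]
        calc -W * N' * (N' * W) = -(W * ((N' * N') * W)) := by
              simp only [neg_mul, mul_assoc]
          _ = -(W * (N * W)) := by rw [hN'N']
      rw [e2, Matrix.trace_neg, Matrix.trace_mul_comm, mul_assoc, htr0, neg_zero]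
    have hN'W : N' * W = 0 := trace_conjTranspose_mul_self_eq_zero' _ htr1
    have hNW0 : N * W = 0 := by
      rw [← hN'N', mul_assoc, hN'W, mul_zero]
    have hfin : N * N * Z = N * Z * N := by
      have h4 : N * (N * Z) - N * (Z * N) = 0 := by
        rw [← mul_sub, ← hWdef, hNW0]
      have h5 := sub_eq_zero.mp h4
      rw [mul_assoc, mul_assoc, h5]
    rw [h, hfin]
  · -- backward direction
    intro h
    have hptAρ : ptA ρ = embB3 t * ptA (N * Z * N) * embB3 t := by
      rw [h]
      conv_lhs => rw [← embBC_embB3 t]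
      rw [ptA_mul_embBC, ptA_embBC_mul]
    have hYeq : Y = ptA (N * Z * N) := by
      rw [hYdef, hptAρ]
      simp only [← mul_assoc]
      rw [← embB3_mul, hst1, embB3_one, one_mul, mul_assoc, ← embB3_mul, hts1, embB3_one,
        mul_one]
    have tr1 : ((N * Z * N) * Z).trace = (Y * Y).trace := by
      rw [hZdef, trace_mul_embBC, ← hYeq]
    have tr2 : ((N * N) * (Z * Z)).trace = (Y * Y).trace := by
      have hNN : N * N = embAB (C := C) (M * M) := by rw [hNdef, ← embAB_mul]
      have hZZ : Z * Z = embBC (A := A) (Y * Y) := by rw [hZdef, ← embBC_mul]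
      rw [hNN, hZZ, trace_mul_embBC, ptA_embAB, hMM, ptA2_embB2_mul_mul, ptA2_ptC, hsρBs,
        embB3_one, one_mul]
    set W := N * Z - Z * N with hWdef
    have hWH : Wᴴ = -W := by
      rw [hWdef]
      simp only [Matrix.conjTranspose_sub, Matrix.conjTranspose_mul, hNH, hZH]
      abel
    have trWW : (Wᴴ * W).trace = 0 := by
      have e1 : ((N * Z) * (N * Z)).trace = ((N * Z * N) * Z).trace := by
        have e : (N * Z) * (N * Z) = (N * Z * N) * Z := by simp only [mul_assoc]
        rw [e]
      have e2 : ((N * Z) * (Z * N)).trace = ((N * N) * (Z * Z)).trace := by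
        have e : (N * Z) * (Z * N) = N * (Z * Z) * N := by simp only [mul_assoc]
        rw [e, Matrix.trace_mul_cycle]
      have e3 : ((Z * N) * (N * Z)).trace = ((N * N) * (Z * Z)).trace := by
        have e : (Z * N) * (N * Z) = Z * (N * N) * Z := by simp only [mul_assoc]
        rw [e, Matrix.trace_mul_cycle, Matrix.trace_mul_comm]
      have e4 : ((Z * N) * (Z * N)).trace = ((N * Z * N) * Z).trace := by
        have e : (Z * N) * (Z * N) = Z * (N * Z * N) := by simp only [mul_assoc]
        rw [e, Matrix.trace_mul_comm]
      rw [hWH]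
      have e5 : (-W) * W = -(W * W) := by simp
      rw [e5, Matrix.trace_neg]
      have e6 : (W * W).trace = ((N * Z) * (N * Z)).trace - ((N * Z) * (Z * N)).trace
          - (((Z * N) * (N * Z)).trace - ((Z * N) * (Z * N)).trace) := by
        rw [hWdef]
        simp only [sub_mul, mul_sub, Matrix.trace_sub]
        ring
      rw [e6, e1, e2, e3, e4, tr1, tr2]
      ring
    have hW0 : W = 0 := by
      have := trace_conjTranspose_mul_self_eq_zero' W trWW
      exact this
    have hcomm : N * Z = Z * N := sub_eq_zero.mp hW0
    have hfin : N * Z * N = N * N * Z := by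
      rw [mul_assoc, ← hcomm, ← mul_assoc]
    rw [h, hfin]

end BSQMC
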